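/- Let h : Σ₃* → Σ₅* be the morphism defined by h(0) = 012, h(1) = 013, h(2) = 014, and let w' be an infinite squarefree word over Σ₃ = {0,1,2}. Then the infinite word w = h(w') is squarefree, and for every subword x of w with |x| ≥ 2, the reversal x^R is not a subword of w. -/

import Mathlib

/-- `x` occurs as a contiguous block of consecutive letters of the infinite word `w`. -/
def IsFactor {α : Type*} (x : List α) (w : ℕ → α) : Prop :=
  ∃ i : ℕ, x = (List.range x.length).map fun j => w (i + j)

/-- The morphism `h` with `h(0) = 012`, `h(1) = 013`, `h(2) = 014`. -/
def h : Fin 3 → List (Fin 5)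
  | 0 => [0, 1, 2]
  | 1 => [0, 1, 3]
  | 2 => [0, 1, 4]

/-- The image `h(w')` of an infinite word `w'` under the (3-uniform) morphism `h`:
the `n`-th letter of `h(w'₀)h(w'₁)h(w'₂)⋯`. -/
def hOmega (w' : ℕ → Fin 3) : ℕ → Fin 5 :=
  fun n => (h (w' (n / 3))).getD (n % 3) 0

lemma factor_get {α : Type*} {x : List α} {w : ℕ → α} {i : ℕ}
    (hx : x = (List.range x.length).map fun j => w (i + j)) {j : ℕ} (hj : j < x.length) :
    x[j] = w (i + j) := by
  have h1 : x[j]? = some x[j] := List.getElem?_eq_getElem hj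
  conv_lhs at h1 => rw [hx]
  simp only [List.getElem?_map, List.getElem?_range (by exact hj), Option.map_some] at h1
  exact (Option.some_injective _ h1).symm

lemma hval0 (w' : ℕ → Fin 3) (n : ℕ) (hn : n % 3 = 0) : (hOmega w' n).val = 0 := by
  simp only [hOmega, hn]
  rcases (w' (n / 3)) with ⟨v, hv⟩
  interval_cases v <;> rfl

lemma hval1 (w' : ℕ → Fin 3) (n : ℕ) (hn : n % 3 = 1) : (hOmega w' n).val = 1 := by
  simp only [hOmega, hn]
  rcases (w' (n / 3)) with ⟨v, hv⟩
  interval_cases v <;> rfl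

lemma hval2 (w' : ℕ → Fin 3) (n : ℕ) (hn : n % 3 = 2) :
    (hOmega w' n).val = (w' (n / 3)).val + 2 := by
  simp only [hOmega, hn]
  rcases (w' (n / 3)) with ⟨v, hv⟩
  interval_cases v <;> rfl

/-- Each letter of `hOmega w'` determines the residue of its position mod 3. -/
lemma residue_eq (w' : ℕ → Fin 3) (a b : ℕ) (he : hOmega w' a = hOmega w' b) :
    a % 3 = b % 3 := by
  have hv := congrArg Fin.val he
  have ha : a % 3 = 0 ∨ a % 3 = 1 ∨ a % 3 = 2 := by omega
  have hb : b % 3 = 0 ∨ b % 3 = 1 ∨ b % 3 = 2 := by omega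
  rcases ha with ha | ha | ha <;> rcases hb with hb | hb | hb
  · omega
  · rw [hval0 w' a ha, hval1 w' b hb] at hv; omega
  · rw [hval0 w' a ha, hval2 w' b hb] at hv; omega
  · rw [hval1 w' a ha, hval0 w' b hb] at hv; omega
  · omega
  · rw [hval1 w' a ha, hval2 w' b hb] at hv; omega
  · rw [hval2 w' a ha, hval0 w' b hb] at hv; omega
  · rw [hval2 w' a ha, hval1 w' b hb] at hv; omega
  · omega

lemma square_of_period {α : Type*} (w : ℕ → α) (i m : ℕ) (hm : 0 < m)
    (hp : ∀ k, k < m → w (i + k) = w (i + m + k)) :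
    ∃ x : List α, x ≠ [] ∧ IsFactor (x ++ x) w := by
  refine ⟨(List.range m).map (fun j => w (i + j)), by simpa using hm.ne', i, ?_⟩
  have hl : ((List.range m).map (fun j => w (i + j)) ++
      (List.range m).map (fun j => w (i + j))).length = m + m := by simp
  rw [hl, List.range_add, List.map_append, List.map_map]
  congr 1
  refine List.map_congr_left ?_
  intro k hk
  simp only [List.mem_range] at hk
  have := hp k hk
  simp only [Function.comp]
  rw [show i + (m + k) = i + m + k by omega]
  exact hp k hk

lemma period_of_square {α : Type*} {x : List α} {w : ℕ → α} {i : ℕ}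
    (hfac : x ++ x = (List.range (x ++ x).length).map fun j => w (i + j)) :
    ∀ j, j < x.length → w (i + j) = w (i + x.length + j) := by
  intro j hj
  have hj1 : j < (x ++ x).length := by simp; omega
  have hj2 : x.length + j < (x ++ x).length := by simp; omega
  have h1 := factor_get hfac hj1
  have h2 := factor_get hfac hj2
  rw [List.getElem_append_left hj] at h1
  rw [List.getElem_append_right (by omega)] at h2
  simp only [Nat.add_sub_cancel_left] at h2
  rw [← h1, show i + x.length + j = i + (x.length + j) by omega, ← h2]

/-- If `w'` is an infinite squarefree ternary word, then `h(w')` is squarefree and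
no subword of `h(w')` of length ≥ 2 has its reversal also a subword. -/
theorem stmt_18 (w' : ℕ → Fin 3)
    (hsf : ∀ x : List (Fin 3), x ≠ [] → ¬ IsFactor (x ++ x) w') :
    (∀ x : List (Fin 5), x ≠ [] → ¬ IsFactor (x ++ x) (hOmega w')) ∧
    (∀ x : List (Fin 5), IsFactor x (hOmega w') → 2 ≤ x.length →
      ¬ IsFactor x.reverse (hOmega w')) := by
  constructor
  · intro x hx ⟨i, hi⟩
    have hper := period_of_square hi
    have hn : 0 < x.length := List.length_pos_iff.mpr hx
    have h0 := hper 0 hn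
    have hres := residue_eq w' (i + 0) (i + x.length + 0) h0
    have h3 : x.length % 3 = 0 := by omega
    set n := x.length with hdefn
    set m := n / 3 with hdefm
    have hmn : 3 * m = n := by omega
    have hm : 0 < m := by omega
    obtain ⟨x', hx', hfac'⟩ := square_of_period w' (i / 3) m hm (by
      intro k hk
      have hle : i ≤ 3 * (i / 3 + k) + 2 := by omega
      set j := 3 * (i / 3 + k) + 2 - i with hdefj
      have hjlt : j < n := by omega
      have key := hper j hjlt
      rw [show i + j = 3 * (i / 3 + k) + 2 by omega,
        show i + n + j = 3 * (i / 3 + m + k) + 2 by omega] at key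
      have v1 := hval2 w' (3 * (i / 3 + k) + 2) (by omega)
      have v2 := hval2 w' (3 * (i / 3 + m + k) + 2) (by omega)
      have d1 : (3 * (i / 3 + k) + 2) / 3 = i / 3 + k := by omega
      have d2 : (3 * (i / 3 + m + k) + 2) / 3 = i / 3 + m + k := by omega
      rw [d1] at v1
      rw [d2] at v2
      have hv := congrArg Fin.val key
      rw [v1, v2] at hv
      exact Fin.ext (by omega))
    exact hsf x' hx' hfac'
  · intro x ⟨i, hi⟩ hlen ⟨i', hi'⟩
    set n := x.length with hdefn
    have hrl : x.reverse.length = n := by simp [hdefn]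
    have g1 : x.reverse[0]'(by omega) = hOmega w' (i' + 0) :=
      factor_get hi' (by omega)
    have g2 : x.reverse[1]'(by omega) = hOmega w' (i' + 1) :=
      factor_get hi' (by omega)
    rw [List.getElem_reverse] at g1 g2
    have f1 : x[n - 1 - 0]'(by omega) = hOmega w' (i + (n - 1 - 0)) :=
      factor_get hi (by omega)
    have f2 : x[n - 1 - 1]'(by omega) = hOmega w' (i + (n - 1 - 1)) :=
      factor_get hi (by omega)
    have e1 := residue_eq w' (i' + 0) (i + (n - 1 - 0)) (g1.symm.trans f1)
    have e2 := residue_eq w' (i' + 1) (i + (n - 1 - 1)) (g2.symm.trans f2)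
    omega
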